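/- Let θ = Lν + α with L ∈ ℝ^{k×d} of rank d, and let R ∈ ℝ^{k×(k-d)} of rank k−d with L^T R = 0, β = R^T α. For any symmetric positive definite Î, the two expressions θ̃₁ = L(L^T Î L)^{-1} L^T Î (θ̂ − α) + α and θ̃₂ = θ̂ − Î^{-1} R (R^T Î^{-1} R)^{-1} (R^T θ̂ − β) coincide for every θ̂ ∈ ℝ^k. -/

import Mathlib

open Matrix

/-!
With `P = L(LᵀÎL)⁻¹LᵀÎ` and `Q = Î⁻¹R(RᵀÎ⁻¹R)⁻¹Rᵀ`, both sides agree as soon as `P + Q = 1`.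
Since `LᵀR = 0`, `P + Q` fixes the columns of `L` and of `Î⁻¹R`, and these columns span the
whole space: they are independent (apply `LᵀÎ`, then `Rᵀ`) and there are `k` of them.
-/

namespace Matrix

variable {K m n p : Type*} [Field K] [Fintype n]

theorem mulVec_injective_of_rank_eq_card {A : Matrix m n K} (h : A.rank = Fintype.card n) :
    Function.Injective A.mulVec :=
  mulVec_injective_iff.2 <| linearIndependent_iff_card_eq_finrank_span.2 <| by
    rw [Set.finrank, ← rank_eq_finrank_span_cols, h]

variable [Fintype m] [Fintype p] [DecidableEq m] [DecidableEq n] [DecidableEq p]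
  {I : Matrix m m K} {L : Matrix m n K} {R : Matrix m p K}

theorem fromCols_mulVec_surjective (hcard : Fintype.card n + Fintype.card p = Fintype.card m)
    (hI : IsUnit I.det) (hLR : Lᵀ * R = 0)
    (hS : IsUnit (Lᵀ * I * L).det) (hT : IsUnit (Rᵀ * I⁻¹ * R).det) :
    Function.Surjective (fromCols L (I⁻¹ * R)).mulVec := by
  suffices hinj : Function.Injective (fromCols L (I⁻¹ * R)).mulVecLin by
    refine (LinearMap.injective_iff_surjective_of_finrank_eq_finrank ?_).1 hinj
    simp [hcard]
  rw [← LinearMap.ker_eq_bot, Submodule.eq_bot_iff]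
  intro u hu
  rw [← Sum.elim_comp_inl_inr u] at hu ⊢
  set a := u ∘ Sum.inl
  set b := u ∘ Sum.inr
  replace hu : L *ᵥ a + (I⁻¹ * R) *ᵥ b = 0 := by
    simpa [fromCols_mulVec_sumElim] using hu
  have hLIR : Lᵀ * I * (I⁻¹ * R) = 0 := by
    rw [Matrix.mul_assoc, mul_nonsing_inv_cancel_left I R hI, hLR]
  have ha : a = 0 := by
    have hSa : (Lᵀ * I * L) *ᵥ a = 0 := by
      simpa [mulVec_add, mulVec_mulVec, hLIR] using congrArg ((Lᵀ * I) *ᵥ ·) hu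
    exact mulVec_injective_of_det_ne_zero hS.ne_zero (hSa.trans (mulVec_zero _).symm)
  have hb : b = 0 := by
    rw [ha, mulVec_zero, zero_add] at hu
    have hTb : (Rᵀ * I⁻¹ * R) *ᵥ b = 0 := by
      simpa [mulVec_mulVec, Matrix.mul_assoc] using congrArg (Rᵀ *ᵥ ·) hu
    exact mulVec_injective_of_det_ne_zero hT.ne_zero (hTb.trans (mulVec_zero _).symm)
  rw [ha, hb]
  ext (i | i) <;> rfl

theorem proj_add_complementary_proj_eq_one
    (hcard : Fintype.card n + Fintype.card p = Fintype.card m)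
    (hI : IsUnit I.det) (hLR : Lᵀ * R = 0)
    (hS : IsUnit (Lᵀ * I * L).det) (hT : IsUnit (Rᵀ * I⁻¹ * R).det) :
    L * (Lᵀ * I * L)⁻¹ * Lᵀ * I + I⁻¹ * R * (Rᵀ * I⁻¹ * R)⁻¹ * Rᵀ = 1 := by
  set P := L * (Lᵀ * I * L)⁻¹ * Lᵀ * I + I⁻¹ * R * (Rᵀ * I⁻¹ * R)⁻¹ * Rᵀ
  have hRL : Rᵀ * L = 0 := by rw [← transpose_transpose L, ← transpose_mul, hLR, transpose_zero]
  have hPL : P * L = L := by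
    simp only [P, Matrix.add_mul, Matrix.mul_assoc, hRL, Matrix.mul_zero, add_zero]
    rw [← Matrix.mul_assoc Lᵀ, nonsing_inv_mul _ hS, Matrix.mul_one]
  have hPR : P * (I⁻¹ * R) = I⁻¹ * R := by
    simp only [P, Matrix.add_mul, Matrix.mul_assoc, mul_nonsing_inv_cancel_left I R hI, hLR,
      Matrix.mul_zero, zero_add]
    rw [← Matrix.mul_assoc Rᵀ, nonsing_inv_mul _ hT, Matrix.mul_one]
  rw [ext_iff_mulVec]
  intro v
  obtain ⟨u, rfl⟩ := fromCols_mulVec_surjective hcard hI hLR hS hT v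
  rw [← Sum.elim_comp_inl_inr u, fromCols_mulVec_sumElim, one_mulVec, mulVec_add, mulVec_mulVec,
    mulVec_mulVec, hPL, hPR]

end Matrix

theorem stmt15_general {k d : ℕ} (Ihat : Matrix (Fin k) (Fin k) ℝ)
    (hI : Ihat.PosDef)
    (L : Matrix (Fin k) (Fin d) ℝ) (R : Matrix (Fin k) (Fin (k - d)) ℝ)
    (hL : L.rank = d) (hR : R.rank = k - d)
    (hLR : Lᵀ * R = 0)
    (α : Fin k → ℝ) (θhat : Fin k → ℝ) :
    (L * (Lᵀ * Ihat * L)⁻¹ * Lᵀ * Ihat) *ᵥ (θhat - α) + α =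
      θhat - (Ihat⁻¹ * R * (Rᵀ * Ihat⁻¹ * R)⁻¹) *ᵥ (Rᵀ *ᵥ θhat - Rᵀ *ᵥ α) := by
  have hdk : d ≤ k := by simpa [hL] using L.rank_le_card_height
  have hS : (Lᵀ * Ihat * L).PosDef := by
    simpa using hI.conjTranspose_mul_mul_same
      (mulVec_injective_of_rank_eq_card (by simpa using hL))
  have hT : (Rᵀ * Ihat⁻¹ * R).PosDef := by
    simpa using hI.inv.conjTranspose_mul_mul_same
      (mulVec_injective_of_rank_eq_card (by simpa using hR))
  have hsum := proj_add_complementary_proj_eq_one (by simp only [Fintype.card_fin]; omega)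
    ((isUnit_iff_isUnit_det _).1 hI.isUnit) hLR
    ((isUnit_iff_isUnit_det _).1 hS.isUnit) ((isUnit_iff_isUnit_det _).1 hT.isUnit)
  have hPQ := congrArg (· *ᵥ (θhat - α)) hsum
  simp only [add_mulVec, one_mulVec] at hPQ
  rw [← mulVec_sub, mulVec_mulVec, eq_sub_iff_add_eq, add_right_comm, hPQ, sub_add_cancel]

/-- Under the linear restriction `θ = Lν + α` with matching `R`
(`LᵀR = 0`, `(L R)` nonsingular, `β = Rᵀα`), the two forms of the constrained
estimator coincide:
`L(LᵀÎL)⁻¹LᵀÎ(θ̂−α)+α = θ̂ − Î⁻¹R(RᵀÎ⁻¹R)⁻¹(Rᵀθ̂−β)` for every `θ̂`. -/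
theorem stmt15 {k d : ℕ} (Ihat : Matrix (Fin k) (Fin k) ℝ)
    (hI : Ihat.PosDef) (hIsym : Ihat.IsSymm)
    (L : Matrix (Fin k) (Fin d) ℝ) (R : Matrix (Fin k) (Fin (k - d)) ℝ)
    (hL : L.rank = d) (hR : R.rank = k - d)
    (hLR : Lᵀ * R = 0)
    (hfull : (Matrix.fromCols L R).rank = k)
    (α : Fin k → ℝ) (θhat : Fin k → ℝ) :
    (L * (Lᵀ * Ihat * L)⁻¹ * Lᵀ * Ihat) *ᵥ (θhat - α) + α =
      θhat - (Ihat⁻¹ * R * (Rᵀ * Ihat⁻¹ * R)⁻¹) *ᵥ (Rᵀ *ᵥ θhat - Rᵀ *ᵥ α) :=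
  stmt15_general Ihat hI L R hL hR hLR α θhat
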